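/- For the BPR cost with ζ = 1, the per-user expected cost F_u(P_u) = Σ_i p_{u,i} Σ_e a_{e,i} t_e [1 + η (g_e + Σ_j a_{e,j} p_{u,j})/κ_e], with fixed nonnegative background flows g_e, constants t_e, κ_e > 0, η ≥ 0, and a_{e,i} ∈ {0,1}, is a convex function of p_u ∈ ℝ^{k_u} whenever each edge e belongs to at most 2 of the user's paths (Σ_i a_{e,i} ≤ 2). -/

import Mathlib

/-!
Exchanging the order of summation writes the cost as a sum over edges of `φₑ(Lₑ p)`, where
`Lₑ p = ∑ j, a e j * p j` is the user's flow on `e` and `φₑ(x) = x · tₑ (1 + η (gₑ + x) / κₑ)`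
is a quadratic in `x` with leading coefficient `tₑ η / κₑ ≥ 0`. Each `φₑ ∘ Lₑ` is a convex function
composed with a linear map, so the sum is convex.
-/

open Finset Matrix

theorem ConvexOn.finset_sum {𝕜 E β ι : Type*} [Semiring 𝕜] [PartialOrder 𝕜] [AddCommMonoid E]
    [AddCommMonoid β] [PartialOrder β] [IsOrderedAddMonoid β] [SMul 𝕜 E] [Module 𝕜 β]
    {s : Set E} (hs : Convex 𝕜 s) (t : Finset ι) {f : ι → E → β}
    (hf : ∀ i ∈ t, ConvexOn 𝕜 s (f i)) :
    ConvexOn 𝕜 s (fun x => ∑ i ∈ t, f i x) := by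
  classical
  induction t using Finset.induction_on with
  | empty => simpa using convexOn_const 0 hs
  | insert i t hi ih =>
    simp only [sum_insert hi]
    exact (hf i (mem_insert_self i t)).add (ih fun j hj => hf j (mem_insert_of_mem hj))

theorem convexOn_mul_add_mul_self (b : ℝ) {m : ℝ} (hm : 0 ≤ m) :
    ConvexOn ℝ Set.univ (fun x : ℝ => x * (b + m * x)) := by
  refine (((LinearMap.mulLeft ℝ b).convexOn convex_univ).add
    (even_two.convexOn_pow.smul hm)).congr fun x _ => ?_
  simp only [Pi.add_apply, LinearMap.mulLeft_apply, smul_eq_mul]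
  ring

theorem sum_mul_sum_mul_eq_sum_dotProduct_mul {ι κ R : Type*} [Fintype ι] [Fintype κ]
    [CommSemiring R] (a : κ → ι → R) (p : ι → R) (c : κ → R) :
    ∑ i, p i * ∑ e, a e i * c e = ∑ e, (a e ⬝ᵥ p) * c e := by
  simp only [mul_sum, dotProduct, sum_mul]
  rw [sum_comm]
  exact sum_congr rfl fun e _ => sum_congr rfl fun i _ => by ring

theorem per_user_cost_convex_of_edge_in_at_most_two_paths_general
    (E : Type*) [Fintype E] (k : ℕ)
    (a : E → Fin k → ℝ)
    (g : E → ℝ)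
    (t κ : E → ℝ) (ht : ∀ e, 0 < t e) (hκ : ∀ e, 0 < κ e)
    (η : ℝ) (hη : 0 ≤ η) :
    ConvexOn ℝ Set.univ (fun p : Fin k → ℝ =>
      ∑ i, p i * ∑ e, a e i * t e * (1 + η * (g e + ∑ j, a e j * p j) / κ e)) := by
  have hedge : ∀ e, ConvexOn ℝ Set.univ
      (fun x : ℝ => x * (t e * (1 + η * g e / κ e) + t e * η / κ e * x)) := fun e =>
    convexOn_mul_add_mul_self _ (div_nonneg (mul_nonneg (ht e).le hη) (hκ e).le)
  have hcost : (fun p : Fin k → ℝ =>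
      ∑ i, p i * ∑ e, a e i * t e * (1 + η * (g e + ∑ j, a e j * p j) / κ e)) =
      fun p => ∑ e, (a e ⬝ᵥ p) * (t e * (1 + η * g e / κ e) + t e * η / κ e * (a e ⬝ᵥ p)) := by
    ext p
    simp only [mul_assoc, sum_mul_sum_mul_eq_sum_dotProduct_mul]
    exact sum_congr rfl fun e _ => by unfold dotProduct; ring
  rw [hcost]
  exact ConvexOn.finset_sum convex_univ _ fun e _ =>
    (hedge e).comp_linearMap (dotProductBilin ℝ ℝ (a e))

/-- With affine BPR costs (`ζ = 1`), the per-user expected cost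
`F_u(p) = ∑ i, p i * ∑ e, a e i * t e * (1 + η (g e + ∑ j, a e j * p j) / κ e)`
is convex in `p` whenever every edge belongs to at most two of the user's paths. -/
theorem per_user_cost_convex_of_edge_in_at_most_two_paths
    (E : Type*) [Fintype E] (k : ℕ)
    (a : E → Fin k → ℝ) (ha : ∀ e i, a e i = 0 ∨ a e i = 1)
    (g : E → ℝ) (hg : ∀ e, 0 ≤ g e)
    (t κ : E → ℝ) (ht : ∀ e, 0 < t e) (hκ : ∀ e, 0 < κ e)
    (η : ℝ) (hη : 0 ≤ η)
    (htwo : ∀ e, ∑ i, a e i ≤ 2) :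
    ConvexOn ℝ Set.univ (fun p : Fin k → ℝ =>
      ∑ i, p i * ∑ e, a e i * t e * (1 + η * (g e + ∑ j, a e j * p j) / κ e)) :=
  per_user_cost_convex_of_edge_in_at_most_two_paths_general E k a g t κ ht hκ η hη
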